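/- If n is a primitive nondeficient number, then its largest prime factor satisfies P(n) ≤ √(2n). -/

import Mathlib

open ArithmeticFunction
open scoped ArithmeticFunction.sigma

/-- A positive integer `n` is nondeficient if `σ n ≥ 2n`; it is a primitive
nondeficient number (pnd) if moreover every proper divisor is deficient. -/
def Pnd (n : ℕ) : Prop :=
  0 < n ∧ 2 * n ≤ σ 1 n ∧ ∀ d : ℕ, d ∣ n → d < n → σ 1 d < 2 * d

/-- The largest prime factor of `n`, with the convention `P 1 = 1`. -/
def P (n : ℕ) : ℕ := max 1 (n.primeFactors.sup _root_.id)

/-!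
Write `n = p m` with `p = P(n)`. The proper divisor `m` is deficient and `σ` is submultiplicative,
so `2pm ≤ σ(pm) ≤ (p + 1) σ(m) ≤ (p + 1)(2m - 1)`. Hence `p + 1 ≤ 2m`, and
`p² < p (p + 1) ≤ 2pm = 2n`.
-/

theorem sigma_one_mul_le_mul (a b : ℕ) : σ 1 (a * b) ≤ σ 1 a * σ 1 b := by
  simp only [sigma_one_apply, Nat.divisors_mul, Finset.sum_mul_sum, ← Finset.sum_product',
    ← Finset.image_mul_product]
  exact Finset.sum_image_le_of_nonneg fun _ _ ↦ Nat.zero_le _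

theorem Nat.Prime.sigma_one_mul_le {p : ℕ} (hp : p.Prime) (m : ℕ) :
    σ 1 (p * m) ≤ (p + 1) * σ 1 m := by
  have hσp : σ 1 p = p + 1 := by
    simpa [Finset.sum_range_succ, add_comm] using sigma_one_apply_prime_pow hp (i := 1)
  exact hσp ▸ sigma_one_mul_le_mul p m

theorem Nat.Prime.succ_le_two_mul_of_deficient {p m : ℕ} (hp : p.Prime)
    (hnd : 2 * (p * m) ≤ σ 1 (p * m)) (hdef : σ 1 m < 2 * m) : p + 1 ≤ 2 * m := by
  have := hnd.trans (hp.sigma_one_mul_le m)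
  nlinarith

theorem Pnd.one_lt {n : ℕ} (hn : Pnd n) : 1 < n := by
  obtain ⟨hpos, hnd, -⟩ := hn
  by_contra! h
  obtain rfl : n = 1 := by omega
  simp at hnd

theorem P_mem_primeFactors {n : ℕ} (hn : 1 < n) : P n ∈ n.primeFactors := by
  obtain ⟨p, hp, hsup⟩ :=
    Finset.exists_mem_eq_sup _ (Nat.nonempty_primeFactors.2 hn) _root_.id
  rwa [P, hsup, id, max_eq_right (Nat.prime_of_mem_primeFactors hp).one_lt.le]

/-- The largest prime factor of a primitive nondeficient number `n` is at most
`√(2n)`. -/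
theorem pnd_largest_prime_factor_le (n : ℕ) (hn : Pnd n) :
    (P n : ℝ) ≤ Real.sqrt (2 * n) := by
  have hp := P_mem_primeFactors hn.one_lt
  have hp_prime := Nat.prime_of_mem_primeFactors hp
  obtain ⟨m, hm⟩ := Nat.dvd_of_mem_primeFactors hp
  generalize P n = p at *
  subst hm
  obtain ⟨hpos, hnd, hdef⟩ := hn
  have hm : 0 < m := Nat.pos_of_mul_pos_left hpos
  have hmn : m < p * m := lt_mul_left hm hp_prime.one_lt
  have hsucc := hp_prime.succ_le_two_mul_of_deficient hnd (hdef m (dvd_mul_left m p) hmn)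
  have hsq : p ^ 2 ≤ 2 * (p * m) := by nlinarith
  apply Real.le_sqrt_of_sq_le
  exact_mod_cast hsq
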